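/- (Algebraic core of: the type IB♭ MCK Lefschetz pencil of odd genus has spin total space.) Let g be odd, g ≥ 3. In V, define the vectors: B_{0,2} = α_1+⋯+α_g+δ_2+δ_4+δ_6+δ_7; B_{1,2} = α_1+⋯+α_g+β_1+β_g+δ_4+δ_6+δ_7; B_{2i,2} = α_{i+1}+⋯+α_{g−i}+β_i+β_{g+1−i}+δ_4+δ_6+δ_7 for 1 ≤ i ≤ (g−1)/2; B_{2i+1,2} = α_{i+1}+⋯+α_{g−i}+β_{i+1}+β_{g−i}+δ_4+δ_6+δ_7 for 1 ≤ i ≤ (g−3)/2; B_{g,2} = α_{(g+1)/2}+δ_7+δ_8; a_1 = β_{(g+1)/2}+δ_3+δ_7; a_2 = β_{(g+1)/2}+δ_3+δ_5; b_1 = β_{(g+1)/2}+δ_4+δ_8; b_2 = β_{(g+1)/2}+δ_4+δ_6; B_{k,1} = B_{k,2}+δ_3+δ_4 for 0 ≤ k ≤ g; a_3 = β_{(g+1)/2}+δ_5+δ_7; a_4 = β_{(g+1)/2}; b_3 = β_{(g+1)/2}+δ_6+δ_8; b_4 = β_{(g+1)/2}. Then there exists a quadratic form q with respect to B such that q takes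 the value 1 on each of the vectors B_{k,j} (0 ≤ k ≤ g, j ∈ {1,2}), a_1, a_2, a_3, a_4, b_1, b_2, b_3, b_4, and q(δ_j) = 1 for all j ∈ {1, …, 8}. -/
import Mathlib


/-- The mod-2 first homology of the compact genus-`g` surface with 8 boundary
components: freely spanned by `α_1, …, α_g, β_1, …, β_g, δ_1, …, δ_7`. -/
abbrev MCKVec (g : ℕ) := (Fin g ⊕ Fin g ⊕ Fin 7) → ZMod 2

/-- The basis vector `α_i` (for `1 ≤ i ≤ g`). -/
def alph (g i : ℕ) : MCKVec g := fun x =>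
  match x with
  | Sum.inl j => if (j : ℕ) + 1 = i then 1 else 0
  | _ => 0

/-- The basis vector `β_i` (for `1 ≤ i ≤ g`). -/
def bet (g i : ℕ) : MCKVec g := fun x =>
  match x with
  | Sum.inr (Sum.inl j) => if (j : ℕ) + 1 = i then 1 else 0
  | _ => 0

/-- The basis vector `δ_j` (for `1 ≤ j ≤ 7`). -/
def dlt' (g j : ℕ) : MCKVec g := fun x =>
  match x with
  | Sum.inr (Sum.inr k) => if (k : ℕ) + 1 = j then 1 else 0
  | _ => 0

/-- The boundary classes `δ_1, …, δ_7`, with `δ_8 := δ_1 + δ_2 + ⋯ + δ_7`. -/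
def dlt (g j : ℕ) : MCKVec g :=
  if j = 8 then
    dlt' g 1 + dlt' g 2 + dlt' g 3 + dlt' g 4 + dlt' g 5 + dlt' g 6 + dlt' g 7
  else dlt' g j

/-- The mod-2 intersection pairing: the symmetric bilinear form determined by
`B(α_i, β_i) = 1` for each `i` and `B = 0` on every other pair of basis vectors. -/
def Bform (g : ℕ) (x y : MCKVec g) : ZMod 2 :=
  ∑ j : Fin g,
    (x (Sum.inl j) * y (Sum.inr (Sum.inl j)) + x (Sum.inr (Sum.inl j)) * y (Sum.inl j))

/-- The homology classes of the vanishing cycles  (first half of the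
monodromy factorization), as computed in the paper. -/
def BIBflat (g k : ℕ) : MCKVec g :=
  if k = 0 then (∑ m ∈ Finset.Icc 1 g, alph g m) + dlt g 2 + dlt g 4 + dlt g 6 + dlt g 7
  else if k = 1 then (∑ m ∈ Finset.Icc 1 g, alph g m) + bet g 1 + bet g g + dlt g 4 + dlt g 6 + dlt g 7
  else if k = g then alph g ((g + 1) / 2) + dlt g 7 + dlt g 8
  else if k % 2 = 0 then
    (∑ m ∈ Finset.Icc (k / 2 + 1) (g - k / 2), alph g m)
      + bet g (k / 2) + bet g (g + 1 - k / 2) + dlt g 4 + dlt g 6 + dlt g 7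
  else
    (∑ m ∈ Finset.Icc ((k - 1) / 2 + 1) (g - (k - 1) / 2), alph g m)
      + bet g ((k - 1) / 2 + 1) + bet g (g - (k - 1) / 2) + dlt g 4 + dlt g 6 + dlt g 7

/- ### Auxiliary material for the proof -/

@[simp] lemma alph_inl (g i : ℕ) (j : Fin g) :
    alph g i (Sum.inl j) = if (j:ℕ)+1 = i then 1 else 0 := rfl
@[simp] lemma alph_inr1 (g i : ℕ) (j : Fin g) : alph g i (Sum.inr (Sum.inl j)) = 0 := rfl
@[simp] lemma alph_inr2 (g i : ℕ) (k : Fin 7) : alph g i (Sum.inr (Sum.inr k)) = 0 := rfl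
@[simp] lemma bet_inl (g i : ℕ) (j : Fin g) : bet g i (Sum.inl j) = 0 := rfl
@[simp] lemma bet_inr1 (g i : ℕ) (j : Fin g) :
    bet g i (Sum.inr (Sum.inl j)) = if (j:ℕ)+1 = i then 1 else 0 := rfl
@[simp] lemma bet_inr2 (g i : ℕ) (k : Fin 7) : bet g i (Sum.inr (Sum.inr k)) = 0 := rfl
@[simp] lemma dlt'_inl (g i : ℕ) (j : Fin g) : dlt' g i (Sum.inl j) = 0 := rfl
@[simp] lemma dlt'_inr1 (g i : ℕ) (j : Fin g) : dlt' g i (Sum.inr (Sum.inl j)) = 0 := rfl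
@[simp] lemma dlt'_inr2 (g i : ℕ) (k : Fin 7) :
    dlt' g i (Sum.inr (Sum.inr k)) = if (k:ℕ)+1 = i then 1 else 0 := rfl
@[simp] lemma dlt_inl (g i : ℕ) (j : Fin g) : dlt g i (Sum.inl j) = 0 := by
  unfold dlt; split <;> simp
@[simp] lemma dlt_inr1 (g i : ℕ) (j : Fin g) : dlt g i (Sum.inr (Sum.inl j)) = 0 := by
  unfold dlt; split <;> simp

@[simp] lemma Asum_inl (g a b : ℕ) (j : Fin g) :
    (∑ m ∈ Finset.Icc a b, alph g m) (Sum.inl j)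
      = if a ≤ (j:ℕ)+1 ∧ (j:ℕ)+1 ≤ b then 1 else 0 := by
  rw [Finset.sum_apply]
  simp [Finset.sum_ite_eq, Finset.mem_Icc]
@[simp] lemma Asum_inr1 (g a b : ℕ) (j : Fin g) :
    (∑ m ∈ Finset.Icc a b, alph g m) (Sum.inr (Sum.inl j)) = 0 := by
  rw [Finset.sum_apply]; simp
@[simp] lemma Asum_inr2 (g a b : ℕ) (k : Fin 7) :
    (∑ m ∈ Finset.Icc a b, alph g m) (Sum.inr (Sum.inr k)) = 0 := by
  rw [Finset.sum_apply]; simp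

/-- The quadratic form witnessing the theorem. -/
def qform (g : ℕ) (x : MCKVec g) : ZMod 2 :=
  (∑ j : Fin g, x (Sum.inl j) * x (Sum.inr (Sum.inl j)))
  + (∑ j : Fin g, (if (j:ℕ)+1 = (g+1)/2 then 1 else 0) * x (Sum.inl j))
  + (∑ j : Fin g, (if (g+1)/2 ≤ (j:ℕ)+1 then 1 else 0) * x (Sum.inr (Sum.inl j)))
  + (∑ k : Fin 7, x (Sum.inr (Sum.inr k)))

lemma qform_add (g : ℕ) (x y : MCKVec g) :
    qform g (x + y) = qform g x + qform g y + Bform g x y := by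
  unfold qform Bform
  simp only [Pi.add_apply, mul_add, add_mul, Finset.sum_add_distrib]
  rw [Finset.sum_congr rfl fun (j : Fin g) _ =>
    mul_comm (y (Sum.inl j)) (x (Sum.inr (Sum.inl j)))]
  ring

lemma sum_fin_ite_const (n t : ℕ) (h1 : 1 ≤ t) (h2 : t ≤ n) (c : ZMod 2) :
    ∑ j : Fin n, (if (j:ℕ)+1 = t then c else 0) = c := by
  rw [Fintype.sum_eq_single (⟨t-1, by omega⟩ : Fin n)]
  · rw [if_pos (by simp; omega)]
  · intro b hb
    rw [if_neg]
    intro hc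
    exact hb (by apply Fin.ext; simp; omega)

lemma Bform_add_left (g : ℕ) (x y z : MCKVec g) :
    Bform g (x + y) z = Bform g x z + Bform g y z := by
  unfold Bform
  simp only [Pi.add_apply, add_mul, Finset.sum_add_distrib]
  ring

@[simp] lemma Bform_dlt_right (g j : ℕ) (x : MCKVec g) : Bform g x (dlt g j) = 0 := by
  simp [Bform]

@[simp] lemma Bform_bet_bet (g i j : ℕ) : Bform g (bet g i) (bet g j) = 0 := by
  simp [Bform]

lemma Bform_Asum_bet (g a b t : ℕ) (h1 : 1 ≤ t) (h2 : t ≤ g) :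
    Bform g (∑ m ∈ Finset.Icc a b, alph g m) (bet g t)
      = if a ≤ t ∧ t ≤ b then 1 else 0 := by
  unfold Bform
  simp only [Asum_inl, Asum_inr1, bet_inl, bet_inr1, zero_mul, mul_zero, add_zero]
  have key : ∀ j : Fin g,
      (if a ≤ (j:ℕ)+1 ∧ (j:ℕ)+1 ≤ b then (1:ZMod 2) else 0) * (if (j:ℕ)+1 = t then 1 else 0)
        = if (j:ℕ)+1 = t then (if a ≤ t ∧ t ≤ b then (1:ZMod 2) else 0) else 0 := by
    intro j
    rcases eq_or_ne ((j:ℕ)+1) t with hj | hj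
    · rw [hj]; simp
    · simp [hj]
  rw [Finset.sum_congr rfl fun j _ => key j, sum_fin_ite_const g t h1 h2]

lemma Bform_Asum_bet_zero (g a b t : ℕ) (h1 : 1 ≤ t) (h2 : t ≤ g) (h3 : t < a ∨ b < t) :
    Bform g (∑ m ∈ Finset.Icc a b, alph g m) (bet g t) = 0 := by
  rw [Bform_Asum_bet g a b t h1 h2, if_neg (by omega)]

lemma Bform_Asum_bet_one (g a b t : ℕ) (h1 : 1 ≤ t) (h2 : t ≤ g) (h3 : a ≤ t) (h4 : t ≤ b) :
    Bform g (∑ m ∈ Finset.Icc a b, alph g m) (bet g t) = 1 := by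
  rw [Bform_Asum_bet g a b t h1 h2, if_pos ⟨h3, h4⟩]

lemma qform_bet (g t : ℕ) (h1 : 1 ≤ t) (h2 : t ≤ g) :
    qform g (bet g t) = if (g+1)/2 ≤ t then 1 else 0 := by
  unfold qform
  simp only [bet_inl, bet_inr1, bet_inr2, mul_zero, zero_mul, Finset.sum_const_zero,
    add_zero, zero_add]
  have key : ∀ j : Fin g,
      (if (g+1)/2 ≤ (j:ℕ)+1 then (1:ZMod 2) else 0) * (if (j:ℕ)+1 = t then 1 else 0)
        = if (j:ℕ)+1 = t then (if (g+1)/2 ≤ t then (1:ZMod 2) else 0) else 0 := by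
    intro j
    rcases eq_or_ne ((j:ℕ)+1) t with hj | hj
    · rw [hj]; simp
    · simp [hj]
  rw [Finset.sum_congr rfl fun j _ => key j, sum_fin_ite_const g t h1 h2]

lemma qform_bet_zero (g t : ℕ) (h1 : 1 ≤ t) (h2 : t ≤ g) (h3 : t < (g+1)/2) :
    qform g (bet g t) = 0 := by
  rw [qform_bet g t h1 h2, if_neg (by omega)]

lemma qform_bet_one (g t : ℕ) (h1 : 1 ≤ t) (h2 : t ≤ g) (h3 : (g+1)/2 ≤ t) :
    qform g (bet g t) = 1 := by
  rw [qform_bet g t h1 h2, if_pos h3]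

lemma qform_Asum (g a b : ℕ) (hg : 1 ≤ g) :
    qform g (∑ m ∈ Finset.Icc a b, alph g m)
      = if a ≤ (g+1)/2 ∧ (g+1)/2 ≤ b then 1 else 0 := by
  unfold qform
  simp only [Asum_inl, Asum_inr1, Asum_inr2, mul_zero, zero_mul, Finset.sum_const_zero,
    add_zero, zero_add]
  have key : ∀ j : Fin g,
      (if (j:ℕ)+1 = (g+1)/2 then (1:ZMod 2) else 0)
          * (if a ≤ (j:ℕ)+1 ∧ (j:ℕ)+1 ≤ b then 1 else 0)
        = if (j:ℕ)+1 = (g+1)/2 then (if a ≤ (g+1)/2 ∧ (g+1)/2 ≤ b then (1:ZMod 2) else 0)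
          else 0 := by
    intro j
    rcases eq_or_ne ((j:ℕ)+1) ((g+1)/2) with hj | hj
    · rw [hj]; simp
    · simp [hj]
  rw [Finset.sum_congr rfl fun j _ => key j,
    sum_fin_ite_const g ((g+1)/2) (by omega) (by omega)]

lemma qform_Asum_one (g a b : ℕ) (hg : 1 ≤ g) (h1 : a ≤ (g+1)/2) (h2 : (g+1)/2 ≤ b) :
    qform g (∑ m ∈ Finset.Icc a b, alph g m) = 1 := by
  rw [qform_Asum g a b hg, if_pos ⟨h1, h2⟩]

lemma qform_alph_mid (g : ℕ) (hg : 1 ≤ g) : qform g (alph g ((g+1)/2)) = 1 := by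
  unfold qform
  simp only [alph_inl, alph_inr1, alph_inr2, mul_zero, zero_mul, Finset.sum_const_zero,
    add_zero, zero_add]
  have key : ∀ j : Fin g,
      (if (j:ℕ)+1 = (g+1)/2 then (1:ZMod 2) else 0) * (if (j:ℕ)+1 = (g+1)/2 then 1 else 0)
        = if (j:ℕ)+1 = (g+1)/2 then (1:ZMod 2) else 0 := by
    intro j; split_ifs <;> simp
  rw [Finset.sum_congr rfl fun j _ => key j,
    sum_fin_ite_const g ((g+1)/2) (by omega) (by omega)]

lemma qform_dlt (g j : ℕ) (h1 : 1 ≤ j) (h2 : j ≤ 8) : qform g (dlt g j) = 1 := by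
  unfold qform
  interval_cases j <;>
    simp [dlt, Pi.add_apply] <;> decide

lemma q_BIB (g k : ℕ) (hg : 3 ≤ g) (hgodd : Odd g) (hk : k ≤ g) :
    qform g (BIBflat g k) = 1 := by
  obtain ⟨h, rfl⟩ := hgodd
  have hh : 1 ≤ h := by omega
  unfold BIBflat
  split_ifs with h0 h1 hG he
  · -- k = 0
    simp only [qform_add, Bform_add_left, Bform_dlt_right, add_zero]
    rw [qform_Asum_one (2*h+1) 1 (2*h+1) (by omega) (by omega) (by omega),
      qform_dlt (2*h+1) 2 (by norm_num) (by norm_num),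
      qform_dlt (2*h+1) 4 (by norm_num) (by norm_num),
      qform_dlt (2*h+1) 6 (by norm_num) (by norm_num),
      qform_dlt (2*h+1) 7 (by norm_num) (by norm_num)]
    decide
  · -- k = 1
    simp only [qform_add, Bform_add_left, Bform_dlt_right, Bform_bet_bet, add_zero]
    rw [qform_Asum_one (2*h+1) 1 (2*h+1) (by omega) (by omega) (by omega),
      qform_bet_zero (2*h+1) 1 (by omega) (by omega) (by omega),
      qform_bet_one (2*h+1) (2*h+1) (by omega) (by omega) (by omega),
      Bform_Asum_bet_one (2*h+1) 1 (2*h+1) 1 (by omega) (by omega) (by omega) (by omega),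
      Bform_Asum_bet_one (2*h+1) 1 (2*h+1) (2*h+1) (by omega) (by omega) (by omega) (by omega),
      qform_dlt (2*h+1) 4 (by norm_num) (by norm_num),
      qform_dlt (2*h+1) 6 (by norm_num) (by norm_num),
      qform_dlt (2*h+1) 7 (by norm_num) (by norm_num)]
    decide
  · -- k = g
    simp only [qform_add, Bform_add_left, Bform_dlt_right, add_zero]
    rw [qform_alph_mid (2*h+1) (by omega), qform_dlt (2*h+1) 7 (by norm_num) (by norm_num),
      qform_dlt (2*h+1) 8 (by norm_num) (by norm_num)]
    decide
  · -- k even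
    have hk2 : 2 ≤ k := by omega
    have hkle : k ≤ 2*h := by omega
    have hi1 : 1 ≤ k/2 := by omega
    have hi2 : k/2 ≤ h := by omega
    simp only [qform_add, Bform_add_left, Bform_dlt_right, Bform_bet_bet, add_zero]
    rw [qform_Asum_one (2*h+1) (k/2+1) (2*h+1-k/2) (by omega) (by omega) (by omega),
      qform_bet_zero (2*h+1) (k/2) (by omega) (by omega) (by omega),
      qform_bet_one (2*h+1) (2*h+1+1-k/2) (by omega) (by omega) (by omega),
      Bform_Asum_bet_zero (2*h+1) (k/2+1) (2*h+1-k/2) (k/2) (by omega) (by omega) (by omega),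
      Bform_Asum_bet_zero (2*h+1) (k/2+1) (2*h+1-k/2) (2*h+1+1-k/2) (by omega) (by omega) (by omega),
      qform_dlt (2*h+1) 4 (by norm_num) (by norm_num),
      qform_dlt (2*h+1) 6 (by norm_num) (by norm_num),
      qform_dlt (2*h+1) 7 (by norm_num) (by norm_num)]
    decide
  · -- k odd
    have hk3 : 3 ≤ k := by omega
    have hko : k % 2 = 1 := by omega
    have hkg : k ≤ 2*h - 1 := by omega
    have hi1 : 1 ≤ (k-1)/2 := by omega
    have hi2 : (k-1)/2 ≤ h - 1 := by omega
    simp only [qform_add, Bform_add_left, Bform_dlt_right, Bform_bet_bet, add_zero]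
    rw [qform_Asum_one (2*h+1) ((k-1)/2+1) (2*h+1-(k-1)/2) (by omega) (by omega) (by omega),
      qform_bet_zero (2*h+1) ((k-1)/2+1) (by omega) (by omega) (by omega),
      qform_bet_one (2*h+1) (2*h+1-(k-1)/2) (by omega) (by omega) (by omega),
      Bform_Asum_bet_one (2*h+1) ((k-1)/2+1) (2*h+1-(k-1)/2) ((k-1)/2+1) (by omega) (by omega) (by omega) (by omega),
      Bform_Asum_bet_one (2*h+1) ((k-1)/2+1) (2*h+1-(k-1)/2) (2*h+1-(k-1)/2) (by omega) (by omega) (by omega) (by omega),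
      qform_dlt (2*h+1) 4 (by norm_num) (by norm_num),
      qform_dlt (2*h+1) 6 (by norm_num) (by norm_num),
      qform_dlt (2*h+1) 7 (by norm_num) (by norm_num)]
    decide

/-- There is a quadratic form `q` with respect to the mod-2 intersection
pairing taking the value `1` on all the vanishing cycles
(`B_{k,·}`, their partners `B_{k,·} + δ_3 + δ_4`, and
`a_1, a_2, a_3, a_4, b_1, b_2, b_3, b_4`), and with `q(δ_j) = 1` for all
`j ∈ {1, …, 8}`. -/
theorem typeIBflat_odd_genus_spin (g : ℕ) (hg : 3 ≤ g) (hgodd : Odd g) :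
    ∃ q : MCKVec g → ZMod 2,
      (∀ x y : MCKVec g, q (x + y) = q x + q y + Bform g x y) ∧
      (∀ k ≤ g, q (BIBflat g k) = 1) ∧
      (∀ k ≤ g, q (BIBflat g k + dlt g 3 + dlt g 4) = 1) ∧
      q (bet g ((g + 1) / 2) + dlt g 3 + dlt g 7) = 1 ∧
      q (bet g ((g + 1) / 2) + dlt g 3 + dlt g 5) = 1 ∧
      q (bet g ((g + 1) / 2) + dlt g 5 + dlt g 7) = 1 ∧
      q (bet g ((g + 1) / 2)) = 1 ∧
      q (bet g ((g + 1) / 2) + dlt g 4 + dlt g 8) = 1 ∧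
      q (bet g ((g + 1) / 2) + dlt g 4 + dlt g 6) = 1 ∧
      q (bet g ((g + 1) / 2) + dlt g 6 + dlt g 8) = 1 ∧
      q (bet g ((g + 1) / 2)) = 1 ∧
      (∀ j, 1 ≤ j → j ≤ 8 → q (dlt g j) = 1) := by
  have hbet : qform g (bet g ((g + 1) / 2)) = 1 :=
    qform_bet_one g ((g + 1) / 2) (by omega) (by omega) le_rfl
  have hbetdd : ∀ i j, 1 ≤ i → i ≤ 8 → 1 ≤ j → j ≤ 8 →
      qform g (bet g ((g + 1) / 2) + dlt g i + dlt g j) = 1 := by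
    intro i j hi1 hi2 hj1 hj2
    simp only [qform_add, Bform_dlt_right, add_zero]
    rw [hbet, qform_dlt g i hi1 hi2, qform_dlt g j hj1 hj2]
    decide
  refine ⟨qform g, qform_add g, fun k hk => q_BIB g k hg hgodd hk, ?_,
    hbetdd 3 7 (by norm_num) (by norm_num) (by norm_num) (by norm_num),
    hbetdd 3 5 (by norm_num) (by norm_num) (by norm_num) (by norm_num),
    hbetdd 5 7 (by norm_num) (by norm_num) (by norm_num) (by norm_num),
    hbet,
    hbetdd 4 8 (by norm_num) (by norm_num) (by norm_num) (by norm_num),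
    hbetdd 4 6 (by norm_num) (by norm_num) (by norm_num) (by norm_num),
    hbetdd 6 8 (by norm_num) (by norm_num) (by norm_num) (by norm_num),
    hbet,
    fun j hj1 hj2 => qform_dlt g j hj1 hj2⟩
  intro k hk
  simp only [qform_add, Bform_dlt_right, add_zero]
  rw [q_BIB g k hg hgodd hk, qform_dlt g 3 (by norm_num) (by norm_num),
    qform_dlt g 4 (by norm_num) (by norm_num)]
  decide
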